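/- The family of random variables {ξ̃_{α_n} : n ≥ 1} ∪ {ξ̃_{β_n} : n ≥ 1} is i.i.d., each member uniform on {1,−1}; equivalently, for any k, l ≥ 0, any distinct indices n_1,…,n_k ≥ 1 and distinct indices m_1,…,m_l ≥ 1, and any x_1,…,x_k, y_1,…,y_l ∈ {1,−1}, one has P(ξ̃_{α_{n_i}} = x_i for 1 ≤ i ≤ k and ξ̃_{β_{m_j}} = y_j for 1 ≤ j ≤ l) = 1/2^{k+l}. -/

import Mathlib

/-!
Fix targets `(nᵢ, xᵢ)` for the common-movement walk `T` and `(mⱼ, yⱼ)` for the counter-movement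
walk `S`. Attach to each target a factor that stays `1` until the walk reaches level `nᵢ` and then
becomes `2` or `0` according as `ξ` equals `xᵢ` at that moment. The product of all factors is a
martingale: at each step the new pair `(ξ, η)` only enters through a weight whose values at
`(u, v)` and `(-u, -v)` average to `1`, and since `ξ` and `η` are both fair signs given the past,
the conditional law of `(ξ, η)` is invariant under this flip, however they depend on each other.
Hence the limit of the product has expectation `1`. That limit is a sum over the patterns of
targets that are never reached; on each pattern the unreached targets are decided by the coins
`ζ`, `ψ`, independent of `F_∞`, each contributing a factor `1/2`. Summing over patterns gives
`2^{-(k+l)}`.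
-/

open MeasureTheory ProbabilityTheory Filter Set

noncomputable section

variable {Ω : Type*}

/-- `Q n = 1` if the `n`-th moves agree, `0` if they are opposite. -/
def Qproc (ξ η : ℕ → Ω → ℝ) (n : ℕ) (ω : Ω) : ℕ :=
  if ξ n ω = η n ω then 1 else 0

/-- `T n = ∑_{k=1}^n Q k`, the number of common movements up to step `n`. -/
def Tproc (ξ η : ℕ → Ω → ℝ) (n : ℕ) (ω : Ω) : ℕ :=
  ∑ k ∈ Finset.Icc 1 n, Qproc ξ η k ω

/-- `S n = n - T n`, the number of counter movements up to step `n`. -/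
def Sproc (ξ η : ℕ → Ω → ℝ) (n : ℕ) (ω : Ω) : ℕ :=
  n - Tproc ξ η n ω

/-- `α n = inf {k ≥ 1 : T k = n}`, with `inf ∅ = ⊤`, valued in `ℕ∞`. -/
def alphaProc (ξ η : ℕ → Ω → ℝ) (n : ℕ) (ω : Ω) : ℕ∞ :=
  ⨅ (k : ℕ) (_ : 1 ≤ k ∧ Tproc ξ η k ω = n), (k : ℕ∞)

/-- `β n = inf {k ≥ 1 : S k = n}`, with `inf ∅ = ⊤`, valued in `ℕ∞`. -/
def betaProc (ξ η : ℕ → Ω → ℝ) (n : ℕ) (ω : Ω) : ℕ∞ :=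
  ⨅ (k : ℕ) (_ : 1 ≤ k ∧ Sproc ξ η k ω = n), (k : ℕ∞)

/-- `ξ̃_{α n}`: equal to `ξ_i` on `{α n = i}` (`i < ∞`) and to `ζ n` on `{α n = ∞}`. -/
def xiAlpha (ξ η ζ : ℕ → Ω → ℝ) (n : ℕ) (ω : Ω) : ℝ :=
  if alphaProc ξ η n ω = ⊤ then ζ n ω else ξ (alphaProc ξ η n ω).toNat ω

/-- `ξ̃_{β m}`: equal to `ξ_i` on `{β m = i}` (`i < ∞`) and to `ψ m` on `{β m = ∞}`. -/
def xiBeta (ξ η ψ : ℕ → Ω → ℝ) (m : ℕ) (ω : Ω) : ℝ :=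
  if betaProc ξ η m ω = ⊤ then ψ m ω else ξ (betaProc ξ η m ω).toNat ω

/-- The common-movement walk `X n = ∑_{i=1}^n ξ̃_{α i}`. -/
def Xproc (ξ η ζ : ℕ → Ω → ℝ) (n : ℕ) (ω : Ω) : ℝ :=
  ∑ i ∈ Finset.Icc 1 n, xiAlpha ξ η ζ i ω

/-- The counter-movement walk `Y n = ∑_{i=1}^n ξ̃_{β i}`. -/
def Yproc (ξ η ψ : ℕ → Ω → ℝ) (n : ℕ) (ω : Ω) : ℝ :=
  ∑ i ∈ Finset.Icc 1 n, xiBeta ξ η ψ i ω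

section CountingProcess

variable {N : ℕ → Ω → ℕ}

def HasUnitSteps (N : ℕ → Ω → ℕ) : Prop :=
  ∀ t ω, N (t + 1) ω = N t ω ∨ N (t + 1) ω = N t ω + 1

/-- The first time `N` reaches level `n`; the junk value `0` if it never does. -/
def reachTime (N : ℕ → Ω → ℕ) (n : ℕ) (ω : Ω) : ℕ := sInf {t | n ≤ N t ω}

theorem reachTime_le {n t : ℕ} {ω : Ω} (h : n ≤ N t ω) : reachTime N n ω ≤ t := Nat.sInf_le h

theorem le_apply_reachTime {n t : ℕ} {ω : Ω} (h : n ≤ N t ω) : n ≤ N (reachTime N n ω) ω :=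
  Nat.sInf_mem (⟨t, h⟩ : {t | n ≤ N t ω}.Nonempty)

theorem lt_of_lt_reachTime {n s : ℕ} {ω : Ω} (h : s < reachTime N n ω) : N s ω < n :=
  not_le.1 fun hs => (reachTime_le hs).not_gt h

theorem one_le_reachTime (hN0 : ∀ ω, N 0 ω = 0) {n t : ℕ} {ω : Ω} (hn : 1 ≤ n)
    (h : n ≤ N t ω) : 1 ≤ reachTime N n ω := by
  by_contra h0
  have := le_apply_reachTime h
  rw [Nat.lt_one_iff.1 (not_le.1 h0), hN0] at this
  omega

theorem monotone_of_step (hstep : HasUnitSteps N)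
    (ω : Ω) : Monotone (N · ω) :=
  monotone_nat_of_le_succ fun t => by rcases hstep t ω with h | h <;> omega

/-- A process with unit steps cannot jump over a level. -/
theorem apply_reachTime (hN0 : ∀ ω, N 0 ω = 0)
    (hstep : HasUnitSteps N)
    {n t : ℕ} {ω : Ω} (hn : 1 ≤ n) (h : n ≤ N t ω) : N (reachTime N n ω) ω = n := by
  obtain ⟨s, hs⟩ := Nat.exists_eq_add_of_le' (one_le_reachTime hN0 hn h)
  have hbefore := lt_of_lt_reachTime (N := N) (show s < reachTime N n ω by omega)
  have hat := le_apply_reachTime h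
  rw [hs] at hat ⊢
  rcases hstep s ω with h' | h' <;> omega

theorem reachTime_eq_succ (hstep : HasUnitSteps N)
    {n t : ℕ} {ω : Ω} (hlt : N t ω < n) (hle : n ≤ N (t + 1) ω) : reachTime N n ω = t + 1 :=
  le_antisymm (reachTime_le hle) <| Nat.succ_le_of_lt <| not_le.1 fun h =>
    (monotone_of_step hstep ω h).not_gt (hlt.trans_le (le_apply_reachTime hle))

theorem iInf_hit_eq (hN0 : ∀ ω, N 0 ω = 0)
    (hstep : HasUnitSteps N) {n : ℕ} (hn : 1 ≤ n)
    (ω : Ω) [Decidable (∃ t, n ≤ N t ω)] :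
    ⨅ (k : ℕ) (_ : 1 ≤ k ∧ N k ω = n), (k : ℕ∞)
      = if ∃ t, n ≤ N t ω then (reachTime N n ω : ℕ∞) else ⊤ := by
  split_ifs with h
  · obtain ⟨t, ht⟩ := h
    refine le_antisymm
      (iInf₂_le _ ⟨one_le_reachTime hN0 hn ht, apply_reachTime hN0 hstep hn ht⟩) ?_
    exact le_iInf₂ fun k hk => by exact_mod_cast reachTime_le hk.2.ge
  · simp only [not_exists, not_le] at h
    simp only [iInf_eq_top, ENat.natCast_ne_top, imp_false, not_and]
    exact fun k _ hk => (h k).ne hk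

open Classical in
/-- The paper's `ξ̃_{α_n}` for `N = T` and `ξ̃_{β_n}` for `N = S`. -/
def valueAtReach (N : ℕ → Ω → ℕ) (ξ ζ : ℕ → Ω → ℝ) (n : ℕ) (ω : Ω) : ℝ :=
  if ∃ t, n ≤ N t ω then ξ (reachTime N n ω) ω else ζ n ω

def reachPattern (N : ℕ → Ω → ℕ) (ξ : ℕ → Ω → ℝ) {k : ℕ} (nn : Fin k → ℕ) (x : Fin k → ℝ)
    (I : Finset (Fin k)) : Set Ω :=
  ⋂ i, if i ∈ I then {ω | ∀ t, N t ω < nn i}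
    else {ω | ∃ t, nn i ≤ N t ω ∧ ξ (reachTime N (nn i) ω) ω = x i}

section Pattern

variable {ξ : ℕ → Ω → ℝ} {k : ℕ} {nn : Fin k → ℕ} {x : Fin k → ℝ}

theorem mem_reachPattern {I : Finset (Fin k)} {ω : Ω} :
    ω ∈ reachPattern N ξ nn x I ↔
      ∀ i, (i ∈ I ↔ ∀ t, N t ω < nn i) ∧ (i ∉ I → ξ (reachTime N (nn i) ω) ω = x i) := by
  simp only [reachPattern, mem_iInter]
  refine forall_congr' fun i => ?_
  by_cases hi : i ∈ I <;> simp [hi]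

theorem eq_of_mem_reachPattern {I J : Finset (Fin k)} {ω : Ω}
    (hI : ω ∈ reachPattern N ξ nn x I) (hJ : ω ∈ reachPattern N ξ nn x J) : I = J := by
  rw [mem_reachPattern] at hI hJ
  ext i
  rw [(hI i).1, (hJ i).1]

theorem valueAtReach_of_reached {ζ : ℕ → Ω → ℝ} {n : ℕ} {ω : Ω} (h : ∃ t, n ≤ N t ω) :
    valueAtReach N ξ ζ n ω = ξ (reachTime N n ω) ω := if_pos h

theorem valueAtReach_of_not_reached {ζ : ℕ → Ω → ℝ} {n : ℕ} {ω : Ω} (h : ∀ t, N t ω < n) :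
    valueAtReach N ξ ζ n ω = ζ n ω := if_neg (by simpa using h)

theorem setOf_valueAtReach_eq_iUnion (ζ : ℕ → Ω → ℝ) :
    {ω | ∀ i, valueAtReach N ξ ζ (nn i) ω = x i}
      = ⋃ I, reachPattern N ξ nn x I ∩ ⋂ i ∈ I, {ω | ζ (nn i) ω = x i} := by
  classical
  ext ω
  simp only [mem_ofPred_eq, mem_iUnion, mem_inter_iff, mem_iInter₂]
  constructor
  · intro h
    refine ⟨Finset.univ.filter fun i => ∀ t, N t ω < nn i, mem_reachPattern.2 fun i => ?_,
      fun i hi => ?_⟩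
    · refine ⟨by simp, fun hi => ?_⟩
      have hr : ∃ t, nn i ≤ N t ω := by simpa using hi
      rw [← valueAtReach_of_reached (ξ := ξ) (ζ := ζ) hr, h i]
    · rw [← valueAtReach_of_not_reached (ξ := ξ) (ζ := ζ) (Finset.mem_filter.1 hi).2, h i]
  · rintro ⟨I, hI, hζ⟩ i
    rw [mem_reachPattern] at hI
    by_cases hi : i ∈ I
    · rw [valueAtReach_of_not_reached ((hI i).1.1 hi), hζ i hi]
    · have hr : ∃ t, nn i ≤ N t ω := by simpa [(hI i).1] using hi
      rw [valueAtReach_of_reached hr, (hI i).2 hi]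

end Pattern

section Measurability

variable {mΩ : MeasurableSpace Ω} {F : Filtration ℕ mΩ} {ξ : ℕ → Ω → ℝ}

theorem le_and_reachTime_eq_iff {n s : ℕ} {ω : Ω} :
    n ≤ N s ω ∧ reachTime N n ω = s ↔ n ≤ N s ω ∧ ∀ u < s, N u ω < n := by
  refine and_congr_right fun hs => ⟨fun h u hu => lt_of_lt_reachTime (h ▸ hu), fun h => ?_⟩
  exact le_antisymm (reachTime_le hs) <| not_lt.1 fun hlt =>
    (h _ hlt).not_ge (le_apply_reachTime hs)

theorem measurableSet_reachTime_eq (hN : ∀ t, Measurable[F t] (N t)) (n s : ℕ) :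
    MeasurableSet[F s] {ω | n ≤ N s ω ∧ reachTime N n ω = s} := by
  have : {ω | n ≤ N s ω ∧ reachTime N n ω = s}
      = {ω | n ≤ N s ω} ∩ ⋂ u ∈ Finset.range s, {ω | N u ω < n} := by
    ext ω
    simp [le_and_reachTime_eq_iff]
  rw [this]
  exact (hN s measurableSet_Ici).inter <| Finset.measurableSet_biInter _ fun u hu =>
    F.mono (Finset.mem_range.1 hu).le _ (hN u measurableSet_Iio)

theorem measurableSet_reached_and_eq (hN0 : ∀ ω, N 0 ω = 0)
    (hstep : HasUnitSteps N)
    (hN : ∀ t, Measurable[F t] (N t)) (hξ : ∀ s, 1 ≤ s → Measurable[F s] (ξ s))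
    {n : ℕ} (hn : 1 ≤ n) (v : ℝ) (t : ℕ) :
    MeasurableSet[F t] {ω | n ≤ N t ω ∧ ξ (reachTime N n ω) ω = v} := by
  have : {ω | n ≤ N t ω ∧ ξ (reachTime N n ω) ω = v}
      = ⋃ s ∈ Finset.Icc 1 t, {ω | n ≤ N s ω ∧ reachTime N n ω = s} ∩ {ω | ξ s ω = v} := by
    ext ω
    simp only [mem_ofPred_eq, mem_iUnion, mem_inter_iff, Finset.mem_Icc, exists_prop]
    constructor
    · rintro ⟨ht, hv⟩
      exact ⟨_, ⟨one_le_reachTime hN0 hn ht, reachTime_le ht⟩, ⟨le_apply_reachTime ht, rfl⟩, hv⟩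
    · rintro ⟨s, ⟨-, hst⟩, ⟨hs, rfl⟩, hv⟩
      exact ⟨hs.trans (monotone_of_step hstep ω hst), hv⟩
  rw [this]
  exact Finset.measurableSet_biUnion _ fun s hs => F.mono (Finset.mem_Icc.1 hs).2 _ <|
    (measurableSet_reachTime_eq hN n s).inter
      (hξ s (Finset.mem_Icc.1 hs).1 (measurableSet_singleton v))

theorem measurableSet_reachPattern (hN0 : ∀ ω, N 0 ω = 0)
    (hstep : HasUnitSteps N)
    (hN : ∀ t, Measurable[F t] (N t)) (hξ : ∀ s, 1 ≤ s → Measurable[F s] (ξ s))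
    {k : ℕ} {nn : Fin k → ℕ} (hnn : ∀ i, 1 ≤ nn i) (x : Fin k → ℝ) (I : Finset (Fin k)) :
    MeasurableSet[⨆ t, (F t : MeasurableSpace Ω)] (reachPattern N ξ nn x I) := by
  have hF : ∀ t s, MeasurableSet[F t] s → MeasurableSet[⨆ t, (F t : MeasurableSpace Ω)] s :=
    fun t => le_iSup (fun t => (F t : MeasurableSpace Ω)) t
  refine MeasurableSet.iInter fun i => ?_
  split_ifs
  · rw [ofPred_forall]
    exact MeasurableSet.iInter fun t => hF t _ (hN t measurableSet_Iio)
  · rw [ofPred_exists]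
    exact MeasurableSet.iUnion fun t =>
      hF t _ (measurableSet_reached_and_eq hN0 hstep hN hξ (hnn i) (x i) t)

end Measurability

end CountingProcess

theorem norm_prod_le_two_pow {k : ℕ} {f : Fin k → ℝ} (h : ∀ i, ‖f i‖ ≤ 2) :
    ‖∏ i, f i‖ ≤ 2 ^ k := by
  rw [norm_prod]
  calc ∏ i, ‖f i‖ ≤ ∏ _i : Fin k, (2 : ℝ) :=
        Finset.prod_le_prod (fun _ _ => norm_nonneg _) fun i _ => h i
    _ = 2 ^ k := by simp

section ProductMartingale

variable {N : ℕ → Ω → ℕ} {ξ : ℕ → Ω → ℝ} {k : ℕ} {nn : Fin k → ℕ} {x : Fin k → ℝ}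

/-- The factor of the product martingale attached to the target "`ξ = v` when `N` first reaches
`n`". -/
def targetFactor (N : ℕ → Ω → ℕ) (ξ : ℕ → Ω → ℝ) (n : ℕ) (v : ℝ) (t : ℕ) (ω : Ω) : ℝ :=
  if n ≤ N t ω then (if ξ (reachTime N n ω) ω = v then 2 else 0) else 1

open Classical in
def targetFactorLim (N : ℕ → Ω → ℕ) (ξ : ℕ → Ω → ℝ) (n : ℕ) (v : ℝ) (ω : Ω) : ℝ :=
  if ∃ t, n ≤ N t ω then (if ξ (reachTime N n ω) ω = v then 2 else 0) else 1

def targetProduct (N : ℕ → Ω → ℕ) (ξ : ℕ → Ω → ℝ) (nn : Fin k → ℕ) (x : Fin k → ℝ)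
    (t : ℕ) (ω : Ω) : ℝ :=
  ∏ i, targetFactor N ξ (nn i) (x i) t ω

def targetProductLim (N : ℕ → Ω → ℕ) (ξ : ℕ → Ω → ℝ) (nn : Fin k → ℕ) (x : Fin k → ℝ)
    (ω : Ω) : ℝ :=
  ∏ i, targetFactorLim N ξ (nn i) (x i) ω

/-- The factor by which `targetProduct` gets multiplied when `N` steps up to level `c` at a time
where `ξ = w`. -/
def stepWeight (nn : Fin k → ℕ) (x : Fin k → ℝ) (c : ℕ) (w : ℝ) : ℝ :=
  ∏ i, if nn i = c then (if w = x i then 2 else 0) else 1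

theorem targetProduct_zero (hN0 : ∀ ω, N 0 ω = 0) (hnn : ∀ i, 1 ≤ nn i) (ω : Ω) :
    targetProduct N ξ nn x 0 ω = 1 :=
  Finset.prod_eq_one fun i _ => if_neg (by rw [hN0]; exact Nat.not_le.2 (hnn i))

theorem targetProduct_succ_of_eq {t : ℕ} {ω : Ω} (h : N (t + 1) ω = N t ω) :
    targetProduct N ξ nn x (t + 1) ω = targetProduct N ξ nn x t ω := by
  simp only [targetProduct, targetFactor, h]

theorem targetFactor_succ_of_succ
    (hstep : HasUnitSteps N)
    {n : ℕ} {v : ℝ} {t : ℕ} {ω : Ω} (h : N (t + 1) ω = N t ω + 1) :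
    targetFactor N ξ n v (t + 1) ω
      = targetFactor N ξ n v t ω * if n = N t ω + 1 then (if ξ (t + 1) ω = v then 2 else 0)
          else 1 := by
  unfold targetFactor
  by_cases hn : n = N t ω + 1
  · rw [reachTime_eq_succ hstep (t := t) (by omega) (by omega)]
    simp [hn, h]
  · have hreach : n ≤ N (t + 1) ω ↔ n ≤ N t ω := by omega
    simp only [hreach, hn, if_false, mul_one]

theorem targetProduct_succ_of_succ
    (hstep : HasUnitSteps N)
    {t : ℕ} {ω : Ω} (h : N (t + 1) ω = N t ω + 1) :
    targetProduct N ξ nn x (t + 1) ω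
      = targetProduct N ξ nn x t ω * stepWeight nn x (N t ω + 1) (ξ (t + 1) ω) := by
  simp only [targetProduct, stepWeight, targetFactor_succ_of_succ hstep h, eq_comm (a := ξ _ ω),
    Finset.prod_mul_distrib]

/-- At most one target sits at level `c`, and `u`, `-u` are the two values `ξ` can take there. -/
theorem stepWeight_add_neg (hinj : Function.Injective nn) (hx : ∀ i, x i = 1 ∨ x i = -1)
    (c : ℕ) {u : ℝ} (hu : u = 1 ∨ u = -1) : stepWeight nn x c u + stepWeight nn x c (-u) = 2 := by
  by_cases hc : ∃ i, nn i = c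
  · obtain ⟨i, rfl⟩ := hc
    have hsingle : ∀ w, stepWeight nn x (nn i) w = if w = x i then 2 else 0 := fun w =>
      (Finset.prod_eq_single i (fun j _ hj => if_neg (hinj.ne hj)) (by simp)).trans (if_pos rfl)
    rw [hsingle, hsingle]
    rcases hu with rfl | rfl <;> rcases hx i with h | h <;> norm_num [h]
  · simp only [not_exists] at hc
    norm_num [stepWeight, hc]

theorem norm_targetProduct_le (t : ℕ) (ω : Ω) : ‖targetProduct N ξ nn x t ω‖ ≤ 2 ^ k :=
  norm_prod_le_two_pow fun i => by unfold targetFactor; split_ifs <;> norm_num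

theorem norm_stepWeight_le (c : ℕ) (w : ℝ) : ‖stepWeight nn x c w‖ ≤ 2 ^ k :=
  norm_prod_le_two_pow fun i => by split_ifs <;> norm_num

theorem targetProduct_eventually_eq
    (hstep : HasUnitSteps N) (ω : Ω) :
    ∀ᶠ t in atTop, targetProduct N ξ nn x t ω = targetProductLim N ξ nn x ω := by
  have hfactor : ∀ n v, ∀ᶠ t in atTop, targetFactor N ξ n v t ω = targetFactorLim N ξ n v ω := by
    intro n v
    by_cases h : ∃ t, n ≤ N t ω
    · obtain ⟨t₀, ht₀⟩ := h
      filter_upwards [eventually_ge_atTop t₀] with t ht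
      have hreached : ∃ t, n ≤ N t ω := ⟨t₀, ht₀⟩
      simp only [targetFactor, targetFactorLim, hreached,
        ht₀.trans (monotone_of_step hstep ω ht), if_true]
    · simp only [not_exists] at h
      exact Eventually.of_forall fun t => by simp [targetFactor, targetFactorLim, h]
  filter_upwards [eventually_all.2 fun i => hfactor (nn i) (x i)] with t ht
  exact Finset.prod_congr rfl fun i _ => ht i

theorem targetProductLim_eq_sum (ω : Ω) :
    targetProductLim N ξ nn x ω
      = 2 ^ k * ∑ I, (reachPattern N ξ nn x I).indicator (fun _ => (2⁻¹ : ℝ) ^ I.card) ω := by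
  classical
  set U := Finset.univ.filter fun i => ∀ t, N t ω < nn i
  have hU : ∀ I, ω ∈ reachPattern N ξ nn x I → I = U := fun I hI => by
    ext i
    simp [U, ((mem_reachPattern.1 hI) i).1]
  rw [Finset.sum_eq_single U (fun I _ hI => indicator_of_notMem (fun h => hI (hU I h)) _)
    (by simp)]
  by_cases hω : ω ∈ reachPattern N ξ nn x U
  · have hfactor : ∀ i, targetFactorLim N ξ (nn i) (x i) ω = 2 * if i ∈ U then 2⁻¹ else 1 := by
      intro i
      by_cases hi : i ∈ U
      · have : ¬∃ t, nn i ≤ N t ω := by simpa [U] using hi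
        simp [targetFactorLim, this, hi]
      · have hr : ∃ t, nn i ≤ N t ω := by simpa [U] using hi
        simp [targetFactorLim, hr, hi, ((mem_reachPattern.1 hω) i).2 hi]
    simp only [targetProductLim, hfactor, Finset.prod_mul_distrib, Finset.prod_const,
      Finset.card_univ, Fintype.card_fin, Finset.prod_ite_mem, Finset.univ_inter,
      indicator_of_mem hω]
  · obtain ⟨i, hi, hne⟩ : ∃ i, i ∉ U ∧ ξ (reachTime N (nn i) ω) ω ≠ x i := by
      by_contra! h
      exact hω (mem_reachPattern.2 fun i => ⟨by simp [U], h i⟩)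
    have hr : ∃ t, nn i ≤ N t ω := by simpa [U] using hi
    rw [indicator_of_notMem hω, mul_zero]
    exact Finset.prod_eq_zero (Finset.mem_univ i) (by simp [targetFactorLim, hr, hne])

variable {mΩ : MeasurableSpace Ω} {F : Filtration ℕ mΩ}

theorem measurable_targetProduct (hN0 : ∀ ω, N 0 ω = 0)
    (hstep : HasUnitSteps N)
    (hN : ∀ t, Measurable[F t] (N t)) (hξ : ∀ s, 1 ≤ s → Measurable[F s] (ξ s))
    (hnn : ∀ i, 1 ≤ nn i) (t : ℕ) : Measurable[F t] (targetProduct N ξ nn x t) := by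
  refine Finset.measurable_prod _ fun i _ => ?_
  have : targetFactor N ξ (nn i) (x i) t = fun ω =>
      if ω ∈ {ω | nn i ≤ N t ω ∧ ξ (reachTime N (nn i) ω) ω = x i} then 2
      else if ω ∈ {ω | nn i ≤ N t ω} then 0 else 1 := by
    funext ω
    simp only [targetFactor, mem_ofPred_eq]
    split_ifs <;> simp_all
  rw [this]
  exact Measurable.ite (measurableSet_reached_and_eq hN0 hstep hN hξ (hnn i) (x i) t)
    measurable_const (Measurable.ite (hN t measurableSet_Ici) measurable_const measurable_const)

end ProductMartingale

section SignFlip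

structure IsCondFairSign (m : MeasurableSpace Ω) {mΩ : MeasurableSpace Ω} (P : Measure Ω)
    (ξ : Ω → ℝ) : Prop where
  measurable : Measurable ξ
  eq_one_or_neg_one : ∀ ω, ξ ω = 1 ∨ ξ ω = -1
  condExp_half : ∀ u : ℝ, u = 1 ∨ u = -1 →
    P[{ω | ξ ω = u}.indicator (fun _ => (1 : ℝ)) | m] =ᵐ[P] fun _ => 1 / 2

variable {m mΩ : MeasurableSpace Ω} {P : Measure Ω}

theorem setIntegral_inter_eq_compl_inter {A B : Set Ω} (hA : MeasurableSet A)
    (hB : MeasurableSet B) {φ : Ω → ℝ} (hφ : Integrable φ P)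
    (h : ∫ ω in A, φ ω ∂P = ∫ ω in Bᶜ, φ ω ∂P) :
    ∫ ω in A ∩ B, φ ω ∂P = ∫ ω in Aᶜ ∩ Bᶜ, φ ω ∂P := by
  have hA' := integral_inter_add_sdiff hB (hφ.integrableOn (s := A))
  have hB' := integral_inter_add_sdiff hA (hφ.integrableOn (s := Bᶜ))
  rw [sdiff_eq] at hA' hB'
  rw [inter_comm Bᶜ A, inter_comm Bᶜ Aᶜ] at hB'
  linarith

theorem setIntegral_eq_half_of_condExp [IsFiniteMeasure P] (hm : m ≤ mΩ) {A : Set Ω}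
    (hA : MeasurableSet A)
    (hcond : P[A.indicator (fun _ => (1 : ℝ)) | m] =ᵐ[P] fun _ => 1 / 2)
    {φ : Ω → ℝ} (hφm : StronglyMeasurable[m] φ) (hφ : Integrable φ P) :
    ∫ ω in A, φ ω ∂P = (∫ ω, φ ω ∂P) / 2 := by
  have hprod : A.indicator φ = φ * A.indicator (fun _ => (1 : ℝ)) := by
    ext ω
    by_cases h : ω ∈ A <;> simp [h]
  have hint : Integrable (φ * A.indicator fun _ => (1 : ℝ)) P := hprod ▸ hφ.indicator hA
  calc ∫ ω in A, φ ω ∂P = ∫ ω, P[φ * A.indicator (fun _ => (1 : ℝ)) | m] ω ∂P := by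
        rw [integral_condExp hm, ← hprod, integral_indicator hA]
    _ = ∫ ω, φ ω / 2 ∂P := integral_congr_ae <| by
        filter_upwards [condExp_mul_of_stronglyMeasurable_left hφm hint
          ((integrable_const 1).indicator hA), hcond] with ω h1 h2
        rw [h1, Pi.mul_apply, h2]
        ring
    _ = (∫ ω, φ ω ∂P) / 2 := integral_div 2 _

theorem integral_comp_eq_sum_setIntegral {α : Type*} [MeasurableSpace α]
    [MeasurableSingletonClass α] {f : Ω → α} (hf : Measurable f) {S : Finset α}
    (hS : ∀ ω, f ω ∈ S) {G : α → Ω → ℝ} (hG : ∀ p ∈ S, Integrable (G p) P) :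
    ∫ ω, G (f ω) ω ∂P = ∑ p ∈ S, ∫ ω in f ⁻¹' {p}, G p ω ∂P := by
  classical
  have hsum : (fun ω => G (f ω) ω) = fun ω => ∑ p ∈ S, (f ⁻¹' {p}).indicator (G p) ω := by
    funext ω
    rw [Finset.sum_eq_single (f ω) (fun p _ hp => indicator_of_notMem (fun h => hp h.symm) _)
      (fun h => (h (hS ω)).elim), indicator_of_mem (mem_preimage.2 (mem_singleton (f ω)))]
  rw [hsum, integral_finsetSum _ fun p hp => (hG p hp).indicator (hf (measurableSet_singleton p))]
  exact Finset.sum_congr rfl fun p _ => integral_indicator (hf (measurableSet_singleton p))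

namespace IsCondFairSign

variable {ξ η : Ω → ℝ}

theorem measurableSet_eq (hξ : IsCondFairSign m P ξ) (u : ℝ) : MeasurableSet {ω | ξ ω = u} :=
  hξ.measurable (measurableSet_singleton u)

theorem compl_setOf_eq (hξ : IsCondFairSign m P ξ) {u : ℝ} (hu : u = 1 ∨ u = -1) :
    {ω | ξ ω = u}ᶜ = {ω | ξ ω = -u} := by
  ext ω
  simp only [mem_compl_iff, mem_ofPred_eq]
  rcases hξ.eq_one_or_neg_one ω with h | h <;> rcases hu with rfl | rfl <;> norm_num [h]

/-- Two fair signs given `m` have, given `m`, a joint law invariant under `(u, v) ↦ (-u, -v)`,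
whatever their dependence. -/
theorem setIntegral_preimage_neg [IsFiniteMeasure P] (hm : m ≤ mΩ) (hξ : IsCondFairSign m P ξ)
    (hη : IsCondFairSign m P η) {φ : Ω → ℝ} (hφm : StronglyMeasurable[m] φ)
    (hφ : Integrable φ P) {u v : ℝ} (hu : u = 1 ∨ u = -1) (hv : v = 1 ∨ v = -1) :
    ∫ ω in (fun ω => (ξ ω, η ω)) ⁻¹' {(u, v)}, φ ω ∂P
      = ∫ ω in (fun ω => (ξ ω, η ω)) ⁻¹' {(-u, -v)}, φ ω ∂P := by
  have hset : ∀ a b : ℝ, (fun ω => (ξ ω, η ω)) ⁻¹' {(a, b)} = {ω | ξ ω = a} ∩ {ω | η ω = b} :=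
    fun a b => by ext ω; simp
  rw [hset, hset, ← hξ.compl_setOf_eq hu, ← hη.compl_setOf_eq hv]
  have hv' : -v = 1 ∨ -v = -1 := by rcases hv with rfl | rfl <;> norm_num
  have hhalf : ∫ ω in {ω | ξ ω = u}, φ ω ∂P = ∫ ω in {ω | η ω = v}ᶜ, φ ω ∂P := by
    rw [hη.compl_setOf_eq hv,
      setIntegral_eq_half_of_condExp hm (hξ.measurableSet_eq u)
        (hξ.condExp_half u hu) hφm hφ,
      setIntegral_eq_half_of_condExp hm (hη.measurableSet_eq _)
        (hη.condExp_half _ hv') hφm hφ]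
  exact setIntegral_inter_eq_compl_inter (hξ.measurableSet_eq u)
    (hη.measurableSet_eq v) hφ hhalf

theorem integral_comp_neg [IsFiniteMeasure P] (hm : m ≤ mΩ) (hξ : IsCondFairSign m P ξ)
    (hη : IsCondFairSign m P η) {G : ℝ × ℝ → Ω → ℝ} (hGm : ∀ p, StronglyMeasurable[m] (G p))
    (hG : ∀ p, Integrable (G p) P) :
    ∫ ω, G (ξ ω, η ω) ω ∂P = ∫ ω, G (-ξ ω, -η ω) ω ∂P := by
  set S : Finset (ℝ × ℝ) := {1, -1} ×ˢ {1, -1}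
  have hS : ∀ a b : ℝ, (a = 1 ∨ a = -1) → (b = 1 ∨ b = -1) → (a, b) ∈ S ∧ (-a, -b) ∈ S := by
    rintro a b (rfl | rfl) (rfl | rfl) <;> norm_num [S]
  rw [integral_comp_eq_sum_setIntegral (hξ.measurable.prodMk hη.measurable)
      (fun ω => (hS _ _ (hξ.eq_one_or_neg_one ω) (hη.eq_one_or_neg_one ω)).1) fun p _ => hG p,
    integral_comp_eq_sum_setIntegral (f := fun ω => (-ξ ω, -η ω))
      (hξ.measurable.neg.prodMk hη.measurable.neg)
      (fun ω => (hS _ _ (hξ.eq_one_or_neg_one ω) (hη.eq_one_or_neg_one ω)).2) fun p _ => hG p]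
  refine Finset.sum_congr rfl fun ⟨u, v⟩ hp => ?_
  have hneg : (fun ω => (-ξ ω, -η ω)) ⁻¹' {(u, v)} = (fun ω => (ξ ω, η ω)) ⁻¹' {(-u, -v)} := by
    ext ω
    simp [neg_eq_iff_eq_neg]
  simp only [S, Finset.mem_product, Finset.mem_insert, Finset.mem_singleton] at hp
  rw [hneg]
  exact setIntegral_preimage_neg hm hξ hη (hGm _) (hG _) hp.1 hp.2

end IsCondFairSign

theorem isCondFairSign_of_condExp {F : Filtration ℕ mΩ} {χ : ℕ → Ω → ℝ}
    (hχ : ∀ n, 1 ≤ n → Measurable[F n] (χ n)) (hv : ∀ n ω, χ n ω = 1 ∨ χ n ω = -1)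
    (h1 : ∀ n, 1 ≤ n →
      P[({ω | χ n ω = 1}).indicator (fun _ => (1 : ℝ)) | F (n - 1)] =ᵐ[P] fun _ => 1 / 2)
    (h2 : ∀ n, 1 ≤ n →
      P[({ω | χ n ω = -1}).indicator (fun _ => (1 : ℝ)) | F (n - 1)] =ᵐ[P] fun _ => 1 / 2)
    (t : ℕ) : IsCondFairSign (F t) P (χ (t + 1)) where
  measurable := (hχ (t + 1) (by omega)).mono (F.le _) le_rfl
  eq_one_or_neg_one := hv (t + 1)
  condExp_half := by
    rintro u (rfl | rfl)
    exacts [h1 (t + 1) (by omega), h2 (t + 1) (by omega)]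

end SignFlip

section CommonAndCounterMovements

variable {ξ η : ℕ → Ω → ℝ}

theorem Tproc_zero (ω : Ω) : Tproc ξ η 0 ω = 0 := by simp [Tproc]

theorem Sproc_zero (ω : Ω) : Sproc ξ η 0 ω = 0 := by simp [Sproc, Tproc]

theorem Tproc_succ (t : ℕ) (ω : Ω) : Tproc ξ η (t + 1) ω = Tproc ξ η t ω + Qproc ξ η (t + 1) ω :=
  Finset.sum_Icc_succ_top (by omega) _

theorem Tproc_le (t : ℕ) (ω : Ω) : Tproc ξ η t ω ≤ t := by
  induction t with
  | zero => simp [Tproc_zero]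
  | succ t ih =>
    have : Qproc ξ η (t + 1) ω ≤ 1 := by unfold Qproc; split_ifs <;> omega
    rw [Tproc_succ]
    omega

theorem Tproc_Sproc_succ_of_eq {t : ℕ} {ω : Ω} (h : ξ (t + 1) ω = η (t + 1) ω) :
    Tproc ξ η (t + 1) ω = Tproc ξ η t ω + 1 ∧ Sproc ξ η (t + 1) ω = Sproc ξ η t ω := by
  have hT := Tproc_succ (ξ := ξ) (η := η) t ω
  have hle := Tproc_le (ξ := ξ) (η := η) t ω
  simp only [Qproc, h, if_true] at hT
  exact ⟨hT, by unfold Sproc; omega⟩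

theorem Tproc_Sproc_succ_of_ne {t : ℕ} {ω : Ω} (h : ξ (t + 1) ω ≠ η (t + 1) ω) :
    Tproc ξ η (t + 1) ω = Tproc ξ η t ω ∧ Sproc ξ η (t + 1) ω = Sproc ξ η t ω + 1 := by
  have hT := Tproc_succ (ξ := ξ) (η := η) t ω
  have hle := Tproc_le (ξ := ξ) (η := η) t ω
  simp only [Qproc, h, if_false, add_zero] at hT
  exact ⟨hT, by unfold Sproc; omega⟩

theorem hasUnitSteps_Tproc : HasUnitSteps (Tproc ξ η) := fun t ω => by
  by_cases h : ξ (t + 1) ω = η (t + 1) ω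
  · exact .inr (Tproc_Sproc_succ_of_eq h).1
  · exact .inl (Tproc_Sproc_succ_of_ne h).1

theorem hasUnitSteps_Sproc : HasUnitSteps (Sproc ξ η) := fun t ω => by
  by_cases h : ξ (t + 1) ω = η (t + 1) ω
  · exact .inl (Tproc_Sproc_succ_of_eq h).2
  · exact .inr (Tproc_Sproc_succ_of_ne h).2

theorem xiAlpha_eq_valueAtReach (ζ : ℕ → Ω → ℝ) {n : ℕ} (hn : 1 ≤ n) :
    xiAlpha ξ η ζ n = valueAtReach (Tproc ξ η) ξ ζ n := by
  classical
  funext ω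
  simp only [xiAlpha, alphaProc, valueAtReach, iInf_hit_eq Tproc_zero hasUnitSteps_Tproc hn]
  split_ifs <;> simp_all

theorem xiBeta_eq_valueAtReach (ψ : ℕ → Ω → ℝ) {n : ℕ} (hn : 1 ≤ n) :
    xiBeta ξ η ψ n = valueAtReach (Sproc ξ η) ξ ψ n := by
  classical
  funext ω
  simp only [xiBeta, betaProc, valueAtReach, iInf_hit_eq Sproc_zero hasUnitSteps_Sproc hn]
  split_ifs <;> simp_all

variable {mΩ : MeasurableSpace Ω} {F : Filtration ℕ mΩ}

theorem measurable_Tproc (hξ : ∀ n, 1 ≤ n → Measurable[F n] (ξ n))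
    (hη : ∀ n, 1 ≤ n → Measurable[F n] (η n)) (t : ℕ) : Measurable[F t] (Tproc ξ η t) :=
  Finset.measurable_sum _ fun s hs => by
    obtain ⟨hs1, hst⟩ := Finset.mem_Icc.1 hs
    exact (Measurable.ite (measurableSet_eq_fun (hξ s hs1) (hη s hs1)) measurable_const
      measurable_const).mono (F.mono hst) le_rfl

theorem measurable_Sproc (hξ : ∀ n, 1 ≤ n → Measurable[F n] (ξ n))
    (hη : ∀ n, 1 ≤ n → Measurable[F n] (η n)) (t : ℕ) : Measurable[F t] (Sproc ξ η t) :=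
  measurable_const.sub (measurable_Tproc hξ hη t)

end CommonAndCounterMovements

section JointMartingale

variable {ξ η : ℕ → Ω → ℝ} {k l : ℕ} {nn : Fin k → ℕ} {mm : Fin l → ℕ} {x : Fin k → ℝ}
  {y : Fin l → ℝ}

def jointProduct (ξ η : ℕ → Ω → ℝ) (nn : Fin k → ℕ) (x : Fin k → ℝ) (mm : Fin l → ℕ)
    (y : Fin l → ℝ) (t : ℕ) (ω : Ω) : ℝ :=
  targetProduct (Tproc ξ η) ξ nn x t ω * targetProduct (Sproc ξ η) ξ mm y t ω

def jointProductLim (ξ η : ℕ → Ω → ℝ) (nn : Fin k → ℕ) (x : Fin k → ℝ) (mm : Fin l → ℕ)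
    (y : Fin l → ℝ) (ω : Ω) : ℝ :=
  targetProductLim (Tproc ξ η) ξ nn x ω * targetProductLim (Sproc ξ η) ξ mm y ω

/-- `jointProduct` at time `t + 1` when the signs at time `t + 1` are `p`: equal moves advance
the common walk, opposite moves the counter walk. -/
def jointStep (ξ η : ℕ → Ω → ℝ) (nn : Fin k → ℕ) (x : Fin k → ℝ) (mm : Fin l → ℕ)
    (y : Fin l → ℝ) (t : ℕ) (p : ℝ × ℝ) (ω : Ω) : ℝ :=
  jointProduct ξ η nn x mm y t ω * if p.1 = p.2 then stepWeight nn x (Tproc ξ η t ω + 1) p.1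
    else stepWeight mm y (Sproc ξ η t ω + 1) p.1

theorem jointProduct_succ (t : ℕ) (ω : Ω) :
    jointProduct ξ η nn x mm y (t + 1) ω
      = jointStep ξ η nn x mm y t (ξ (t + 1) ω, η (t + 1) ω) ω := by
  by_cases h : ξ (t + 1) ω = η (t + 1) ω
  · obtain ⟨hT, hS⟩ := Tproc_Sproc_succ_of_eq h
    simp only [jointStep, jointProduct, h, if_true,
      targetProduct_succ_of_succ hasUnitSteps_Tproc hT, targetProduct_succ_of_eq hS]
    ring
  · obtain ⟨hT, hS⟩ := Tproc_Sproc_succ_of_ne h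
    simp only [jointStep, jointProduct, h, if_false, targetProduct_succ_of_eq hT,
      targetProduct_succ_of_succ hasUnitSteps_Sproc hS]
    ring

theorem jointStep_add_neg (hnn : Function.Injective nn) (hmm : Function.Injective mm)
    (hx : ∀ i, x i = 1 ∨ x i = -1) (hy : ∀ j, y j = 1 ∨ y j = -1) (t : ℕ) {u v : ℝ}
    (hu : u = 1 ∨ u = -1) (ω : Ω) :
    jointStep ξ η nn x mm y t (u, v) ω + jointStep ξ η nn x mm y t (-u, -v) ω
      = 2 * jointProduct ξ η nn x mm y t ω := by
  simp only [jointStep, neg_inj, ← mul_add]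
  split_ifs
  · rw [stepWeight_add_neg hnn hx _ hu, mul_comm]
  · rw [stepWeight_add_neg hmm hy _ hu, mul_comm]

theorem norm_jointProduct_le (t : ℕ) (ω : Ω) :
    ‖jointProduct ξ η nn x mm y t ω‖ ≤ 2 ^ k * 2 ^ l := by
  rw [jointProduct, norm_mul]
  exact mul_le_mul (norm_targetProduct_le t ω) (norm_targetProduct_le t ω) (norm_nonneg _)
    (by positivity)

theorem norm_jointStep_le (t : ℕ) (p : ℝ × ℝ) (ω : Ω) :
    ‖jointStep ξ η nn x mm y t p ω‖ ≤ 2 ^ k * 2 ^ l * max (2 ^ k) (2 ^ l) := by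
  rw [jointStep, norm_mul]
  refine mul_le_mul (norm_jointProduct_le t ω) ?_ (norm_nonneg _) (by positivity)
  split_ifs
  · exact (norm_stepWeight_le _ _).trans (le_max_left _ _)
  · exact (norm_stepWeight_le _ _).trans (le_max_right _ _)

theorem jointProduct_tendsto (ω : Ω) :
    Tendsto (jointProduct ξ η nn x mm y · ω) atTop (nhds (jointProductLim ξ η nn x mm y ω)) :=
  tendsto_const_nhds.congr' <| by
    filter_upwards
      [targetProduct_eventually_eq (ξ := ξ) (nn := nn) (x := x) (hasUnitSteps_Tproc (η := η)) ω,
        targetProduct_eventually_eq (ξ := ξ) (nn := mm) (x := y) (hasUnitSteps_Sproc (η := η)) ω]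
      with t hT hS
    rw [jointProduct, jointProductLim, hT, hS]

variable {mΩ : MeasurableSpace Ω} {F : Filtration ℕ mΩ} {P : Measure Ω}

theorem measurable_jointProduct (hξ : ∀ n, 1 ≤ n → Measurable[F n] (ξ n))
    (hη : ∀ n, 1 ≤ n → Measurable[F n] (η n)) (hnn1 : ∀ i, 1 ≤ nn i) (hmm1 : ∀ j, 1 ≤ mm j)
    (t : ℕ) : Measurable[F t] (jointProduct ξ η nn x mm y t) :=
  (measurable_targetProduct Tproc_zero hasUnitSteps_Tproc (measurable_Tproc hξ hη) hξ hnn1 t).mul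
    (measurable_targetProduct Sproc_zero hasUnitSteps_Sproc (measurable_Sproc hξ hη) hξ hmm1 t)

theorem measurable_jointStep (hξ : ∀ n, 1 ≤ n → Measurable[F n] (ξ n))
    (hη : ∀ n, 1 ≤ n → Measurable[F n] (η n)) (hnn1 : ∀ i, 1 ≤ nn i) (hmm1 : ∀ j, 1 ≤ mm j)
    (t : ℕ) (p : ℝ × ℝ) : Measurable[F t] (jointStep ξ η nn x mm y t p) := by
  refine (measurable_jointProduct hξ hη hnn1 hmm1 t).mul ?_
  split_ifs
  · exact (measurable_from_top (f := fun c => stepWeight nn x c p.1)).comp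
      ((measurable_Tproc hξ hη t).add_const 1)
  · exact (measurable_from_top (f := fun c => stepWeight mm y c p.1)).comp
      ((measurable_Sproc hξ hη t).add_const 1)

theorem integrable_jointProduct [IsFiniteMeasure P] (hξ : ∀ n, 1 ≤ n → Measurable[F n] (ξ n))
    (hη : ∀ n, 1 ≤ n → Measurable[F n] (η n)) (hnn1 : ∀ i, 1 ≤ nn i) (hmm1 : ∀ j, 1 ≤ mm j)
    (t : ℕ) : Integrable (jointProduct ξ η nn x mm y t) P :=
  .of_bound ((measurable_jointProduct hξ hη hnn1 hmm1 t).mono (F.le t) le_rfl).aestronglyMeasurable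
    _ (.of_forall (norm_jointProduct_le t))

/-- The martingale property, in integrated form: the new signs enter only through `jointStep`,
whose values at `p` and `-p` average to `jointProduct`, and the sign flip does not change the
integral. -/
theorem integral_jointProduct_succ [IsFiniteMeasure P] (hξ : ∀ n, 1 ≤ n → Measurable[F n] (ξ n))
    (hη : ∀ n, 1 ≤ n → Measurable[F n] (η n))
    (hξfair : ∀ t, IsCondFairSign (F t) P (ξ (t + 1)))
    (hηfair : ∀ t, IsCondFairSign (F t) P (η (t + 1)))
    (hnn1 : ∀ i, 1 ≤ nn i) (hmm1 : ∀ j, 1 ≤ mm j)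
    (hnn : Function.Injective nn) (hmm : Function.Injective mm)
    (hx : ∀ i, x i = 1 ∨ x i = -1) (hy : ∀ j, y j = 1 ∨ y j = -1) (t : ℕ) :
    ∫ ω, jointProduct ξ η nn x mm y (t + 1) ω ∂P = ∫ ω, jointProduct ξ η nn x mm y t ω ∂P := by
  have hGm := fun p =>
    (measurable_jointStep (x := x) (y := y) hξ hη hnn1 hmm1 t p).stronglyMeasurable
  have hflip := (hξfair t).integral_comp_neg (F.le t) (hηfair t) hGm fun p =>
    .of_bound ((hGm p).mono (F.le t)).aestronglyMeasurable _ (.of_forall (norm_jointStep_le t p))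
  have hneg : ∀ ω, jointStep ξ η nn x mm y t (-ξ (t + 1) ω, -η (t + 1) ω) ω
      = 2 * jointProduct ξ η nn x mm y t ω - jointProduct ξ η nn x mm y (t + 1) ω := fun ω => by
    rw [← jointStep_add_neg hnn hmm hx hy t ((hξfair t).eq_one_or_neg_one ω), jointProduct_succ]
    ring
  simp only [← jointProduct_succ, hneg] at hflip
  rw [integral_sub ((integrable_jointProduct hξ hη hnn1 hmm1 t).const_mul 2)
    (integrable_jointProduct hξ hη hnn1 hmm1 (t + 1)), integral_const_mul] at hflip
  linarith

theorem integral_jointProductLim [IsProbabilityMeasure P]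
    (hξ : ∀ n, 1 ≤ n → Measurable[F n] (ξ n)) (hη : ∀ n, 1 ≤ n → Measurable[F n] (η n))
    (hξfair : ∀ t, IsCondFairSign (F t) P (ξ (t + 1)))
    (hηfair : ∀ t, IsCondFairSign (F t) P (η (t + 1)))
    (hnn1 : ∀ i, 1 ≤ nn i) (hmm1 : ∀ j, 1 ≤ mm j)
    (hnn : Function.Injective nn) (hmm : Function.Injective mm)
    (hx : ∀ i, x i = 1 ∨ x i = -1) (hy : ∀ j, y j = 1 ∨ y j = -1) :
    ∫ ω, jointProductLim ξ η nn x mm y ω ∂P = 1 := by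
  have hone : ∀ t, ∫ ω, jointProduct ξ η nn x mm y t ω ∂P = 1 := by
    intro t
    induction t with
    | zero => simp [jointProduct, targetProduct_zero Tproc_zero hnn1,
        targetProduct_zero Sproc_zero hmm1]
    | succ t ih =>
      rw [integral_jointProduct_succ hξ hη hξfair hηfair hnn1 hmm1 hnn hmm hx hy, ih]
  have hlim := tendsto_integral_of_dominated_convergence
    (F := jointProduct ξ η nn x mm y) (f := jointProductLim ξ η nn x mm y)
    (fun _ => (2 : ℝ) ^ k * 2 ^ l)
    (fun t => (integrable_jointProduct (P := P) hξ hη hnn1 hmm1 t).aestronglyMeasurable)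
    (integrable_const _) (fun t => .of_forall (norm_jointProduct_le t))
    (.of_forall jointProduct_tendsto)
  simp only [hone] at hlim
  exact tendsto_nhds_unique hlim tendsto_const_nhds

theorem measurableSet_reachPattern_inter (hξ : ∀ n, 1 ≤ n → Measurable[F n] (ξ n))
    (hη : ∀ n, 1 ≤ n → Measurable[F n] (η n)) (hnn1 : ∀ i, 1 ≤ nn i) (hmm1 : ∀ j, 1 ≤ mm j)
    (I : Finset (Fin k)) (J : Finset (Fin l)) :
    MeasurableSet[⨆ t, (F t : MeasurableSpace Ω)]
      (reachPattern (Tproc ξ η) ξ nn x I ∩ reachPattern (Sproc ξ η) ξ mm y J) :=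
  .inter
    (measurableSet_reachPattern Tproc_zero hasUnitSteps_Tproc (measurable_Tproc hξ hη) hξ hnn1 x I)
    (measurableSet_reachPattern Sproc_zero hasUnitSteps_Sproc (measurable_Sproc hξ hη) hξ hmm1 y J)

/-- `∫ jointProductLim = 1`, read off pattern by pattern. -/
theorem sum_measureReal_reachPattern [IsProbabilityMeasure P]
    (hξ : ∀ n, 1 ≤ n → Measurable[F n] (ξ n)) (hη : ∀ n, 1 ≤ n → Measurable[F n] (η n))
    (hξfair : ∀ t, IsCondFairSign (F t) P (ξ (t + 1)))
    (hηfair : ∀ t, IsCondFairSign (F t) P (η (t + 1)))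
    (hnn1 : ∀ i, 1 ≤ nn i) (hmm1 : ∀ j, 1 ≤ mm j)
    (hnn : Function.Injective nn) (hmm : Function.Injective mm)
    (hx : ∀ i, x i = 1 ∨ x i = -1) (hy : ∀ j, y j = 1 ∨ y j = -1) :
    ∑ I, ∑ J, P.real (reachPattern (Tproc ξ η) ξ nn x I ∩ reachPattern (Sproc ξ η) ξ mm y J)
      * ((2⁻¹ : ℝ) ^ I.card * 2⁻¹ ^ J.card) = 2⁻¹ ^ (k + l) := by
  have hmeas : ∀ I J, MeasurableSet
      (reachPattern (Tproc ξ η) ξ nn x I ∩ reachPattern (Sproc ξ η) ξ mm y J) := fun I J =>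
    iSup_le (fun t => F.le t) _ (measurableSet_reachPattern_inter hξ hη hnn1 hmm1 I J)
  have hsum : ∀ ω, jointProductLim ξ η nn x mm y ω = 2 ^ k * 2 ^ l * ∑ I, ∑ J,
      (reachPattern (Tproc ξ η) ξ nn x I ∩ reachPattern (Sproc ξ η) ξ mm y J).indicator
        (fun _ => (2⁻¹ : ℝ) ^ I.card * 2⁻¹ ^ J.card) ω := by
    intro ω
    rw [jointProductLim, targetProductLim_eq_sum, targetProductLim_eq_sum, mul_mul_mul_comm,
      Finset.sum_mul_sum]
    simp only [inter_indicator_mul]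
  have hone := integral_jointProductLim hξ hη hξfair hηfair hnn1 hmm1 hnn hmm hx hy
  simp only [hsum] at hone
  rw [integral_const_mul, integral_finsetSum _ fun I _ => integrable_finsetSum _ fun J _ =>
    (integrable_const _).indicator (hmeas I J)] at hone
  have hinner : ∀ I, ∫ ω, ∑ J, (reachPattern (Tproc ξ η) ξ nn x I
      ∩ reachPattern (Sproc ξ η) ξ mm y J).indicator
        (fun _ => (2⁻¹ : ℝ) ^ I.card * 2⁻¹ ^ J.card) ω ∂P
      = ∑ J, P.real (reachPattern (Tproc ξ η) ξ nn x I ∩ reachPattern (Sproc ξ η) ξ mm y J)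
          * ((2⁻¹ : ℝ) ^ I.card * 2⁻¹ ^ J.card) := fun I => by
    rw [integral_finsetSum _ fun J _ => (integrable_const _).indicator (hmeas I J)]
    exact Finset.sum_congr rfl fun J _ => integral_indicator_const _ (hmeas I J)
  simp only [hinner] at hone
  rw [inv_pow, pow_add]
  exact eq_inv_of_mul_eq_one_right hone

end JointMartingale

section Independence

variable {mΩ : MeasurableSpace Ω} {P : Measure Ω}

theorem ProbabilityTheory.iIndep.measure_inter_biInter_biInter {α β : Type*}
    {m : α ⊕ β ⊕ Unit → MeasurableSpace Ω} (h : iIndep m P) {u : α → Set Ω} {v : β → Set Ω}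
    {D : Set Ω} (hu : ∀ a, MeasurableSet[m (.inl a)] (u a))
    (hv : ∀ b, MeasurableSet[m (.inr (.inl b))] (v b)) (hD : MeasurableSet[m (.inr (.inr ()))] D)
    (A : Finset α) (B : Finset β) :
    P (D ∩ ((⋂ a ∈ A, u a) ∩ ⋂ b ∈ B, v b)) = P D * ((∏ a ∈ A, P (u a)) * ∏ b ∈ B, P (v b)) := by
  have key := h.meas_biInter (S := A.disjSum (B.disjSum {()}))
    (s := Sum.elim u (Sum.elim v fun _ => D)) (by rintro (a | b | ⟨⟩) _ <;> simp [hu, hv, hD])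
  rw [Finset.prod_disjSum, Finset.prod_disjSum, Finset.prod_singleton] at key
  convert key using 1
  · congr 1
    ext ω
    simp [Finset.mem_disjSum]
    tauto
  · simp only [Sum.elim_inl, Sum.elim_inr]
    ring

theorem measureReal_inter_coins {F : Filtration ℕ mΩ} {ζ ψ : ℕ → Ω → ℝ}
    (hindep : iIndep (fun i : ℕ ⊕ ℕ ⊕ Unit =>
      Sum.elim (fun n => MeasurableSpace.comap (ζ n) inferInstance)
        (Sum.elim (fun n => MeasurableSpace.comap (ψ n) inferInstance)
          (fun _ => ⨆ n, (F n : MeasurableSpace Ω))) i) P)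
    (hζd : ∀ n, P {ω | ζ n ω = 1} = 2⁻¹ ∧ P {ω | ζ n ω = -1} = 2⁻¹)
    (hψd : ∀ n, P {ω | ψ n ω = 1} = 2⁻¹ ∧ P {ω | ψ n ω = -1} = 2⁻¹)
    {k l : ℕ} {nn : Fin k → ℕ} {mm : Fin l → ℕ} (hnn : Function.Injective nn)
    (hmm : Function.Injective mm) {x : Fin k → ℝ} {y : Fin l → ℝ}
    (hx : ∀ i, x i = 1 ∨ x i = -1) (hy : ∀ j, y j = 1 ∨ y j = -1) {D : Set Ω}
    (hD : MeasurableSet[⨆ n, (F n : MeasurableSpace Ω)] D) (I : Finset (Fin k))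
    (J : Finset (Fin l)) :
    P.real (D ∩ ((⋂ i ∈ I, {ω | ζ (nn i) ω = x i}) ∩ ⋂ j ∈ J, {ω | ψ (mm j) ω = y j}))
      = P.real D * ((2⁻¹ : ℝ) ^ I.card * 2⁻¹ ^ J.card) := by
  have hζ : ∀ i, P {ω | ζ (nn i) ω = x i} = 2⁻¹ := fun i => by
    rcases hx i with h | h <;> simp [h, hζd]
  have hψ : ∀ j, P {ω | ψ (mm j) ω = y j} = 2⁻¹ := fun j => by
    rcases hy j with h | h <;> simp [h, hψd]
  have hindep' := hindep.precomp (g := Sum.map nn (Sum.map mm id))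
    (Sum.map_injective.2 ⟨hnn, Sum.map_injective.2 ⟨hmm, Function.injective_id⟩⟩)
  rw [measureReal_def, measureReal_def, hindep'.measure_inter_biInter_biInter
      (u := fun i => {ω | ζ (nn i) ω = x i}) (v := fun j => {ω | ψ (mm j) ω = y j})
      (fun i => ⟨{x i}, measurableSet_singleton _, rfl⟩)
      (fun j => ⟨{y j}, measurableSet_singleton _, rfl⟩) hD I J]
  simp [hζ, hψ, ENNReal.toReal_mul]

end Independence

theorem stmt_8_general
    {Ω : Type*} [mΩ : MeasurableSpace Ω] (P : Measure Ω) [IsProbabilityMeasure P]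
    (F : MeasureTheory.Filtration ℕ mΩ)
    (ξ η : ℕ → Ω → ℝ)
    (hξm : ∀ n, 1 ≤ n → Measurable[F n] (ξ n))
    (hηm : ∀ n, 1 ≤ n → Measurable[F n] (η n))
    (hξv : ∀ n ω, ξ n ω = 1 ∨ ξ n ω = -1)
    (hηv : ∀ n ω, η n ω = 1 ∨ η n ω = -1)
    (hhalf : ∀ n, 1 ≤ n →
      (P[({ω | ξ n ω = 1}).indicator (fun _ => (1 : ℝ)) | F (n - 1)] =ᵐ[P] fun _ => 1 / 2) ∧
      (P[({ω | ξ n ω = -1}).indicator (fun _ => (1 : ℝ)) | F (n - 1)] =ᵐ[P] fun _ => 1 / 2) ∧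
      (P[({ω | η n ω = 1}).indicator (fun _ => (1 : ℝ)) | F (n - 1)] =ᵐ[P] fun _ => 1 / 2) ∧
      (P[({ω | η n ω = -1}).indicator (fun _ => (1 : ℝ)) | F (n - 1)] =ᵐ[P] fun _ => 1 / 2))
    (ζ ψ : ℕ → Ω → ℝ)
    (hζm : ∀ n, Measurable (ζ n)) (hψm : ∀ n, Measurable (ψ n))
    (hζd : ∀ n, P {ω | ζ n ω = 1} = 2⁻¹ ∧ P {ω | ζ n ω = -1} = 2⁻¹)
    (hψd : ∀ n, P {ω | ψ n ω = 1} = 2⁻¹ ∧ P {ω | ψ n ω = -1} = 2⁻¹)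
    (hindep : iIndep (fun i : ℕ ⊕ ℕ ⊕ Unit =>
      Sum.elim (fun n => MeasurableSpace.comap (ζ n) inferInstance)
        (Sum.elim (fun n => MeasurableSpace.comap (ψ n) inferInstance)
          (fun _ => ⨆ n, (F n : MeasurableSpace Ω))) i) P) :
    ∀ (k l : ℕ) (nn : Fin k → ℕ) (mm : Fin l → ℕ),
      (∀ i, 1 ≤ nn i) → (∀ j, 1 ≤ mm j) →
      Function.Injective nn → Function.Injective mm →
      ∀ (x : Fin k → ℝ) (y : Fin l → ℝ),
        (∀ i, x i = 1 ∨ x i = -1) → (∀ j, y j = 1 ∨ y j = -1) →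
        P ({ω | ∀ i, xiAlpha ξ η ζ (nn i) ω = x i} ∩ {ω | ∀ j, xiBeta ξ η ψ (mm j) ω = y j})
          = 2⁻¹ ^ (k + l) := by
  intro k l nn mm hnn1 hmm1 hnn hmm x y hx hy
  have hξfair := isCondFairSign_of_condExp (P := P) hξm hξv (fun n hn => (hhalf n hn).1)
    fun n hn => (hhalf n hn).2.1
  have hηfair := isCondFairSign_of_condExp (P := P) hηm hηv (fun n hn => (hhalf n hn).2.2.1)
    fun n hn => (hhalf n hn).2.2.2
  let E : Finset (Fin k) × Finset (Fin l) → Set Ω := fun p =>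
    (reachPattern (Tproc ξ η) ξ nn x p.1 ∩ reachPattern (Sproc ξ η) ξ mm y p.2)
      ∩ ((⋂ i ∈ p.1, {ω | ζ (nn i) ω = x i}) ∩ ⋂ j ∈ p.2, {ω | ψ (mm j) ω = y j})
  have hE : {ω | ∀ i, xiAlpha ξ η ζ (nn i) ω = x i} ∩ {ω | ∀ j, xiBeta ξ η ψ (mm j) ω = y j}
      = ⋃ p, E p := by
    simp only [E, xiAlpha_eq_valueAtReach ζ (hnn1 _), xiBeta_eq_valueAtReach ψ (hmm1 _),
      setOf_valueAtReach_eq_iUnion, iUnion_inter_iUnion, iUnion_prod', inter_inter_inter_comm]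
  have hdisj : Pairwise fun p q => Disjoint (E p) (E q) := fun p q hpq =>
    disjoint_left.2 fun ω hp hq => hpq <|
      Prod.ext (eq_of_mem_reachPattern hp.1.1 hq.1.1) (eq_of_mem_reachPattern hp.1.2 hq.1.2)
  have hmeas : ∀ p, MeasurableSet (E p) := fun p =>
    (iSup_le (fun t => F.le t) _ (measurableSet_reachPattern_inter hξm hηm hnn1 hmm1 _ _)).inter
      ((Finset.measurableSet_biInter _ fun i _ => hζm _ (measurableSet_singleton _)).inter
        (Finset.measurableSet_biInter _ fun j _ => hψm _ (measurableSet_singleton _)))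
  rw [← ofReal_measureReal, hE, measureReal_iUnion_fintype hdisj hmeas, Fintype.sum_prod_type]
  simp only [E, measureReal_inter_coins hindep hζd hψd hnn hmm hx hy
    (measurableSet_reachPattern_inter hξm hηm hnn1 hmm1 _ _)]
  rw [sum_measureReal_reachPattern hξm hηm hξfair hηfair hnn1 hmm1 hnn hmm hx hy,
    ENNReal.ofReal_pow (by norm_num), ENNReal.ofReal_inv_of_pos (by norm_num), ENNReal.ofReal_ofNat]

theorem stmt_8
    {Ω : Type*} [mΩ : MeasurableSpace Ω] (P : Measure Ω) [IsProbabilityMeasure P]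
    (F : MeasureTheory.Filtration ℕ mΩ) (hF0 : F 0 = ⊥)
    (ξ η : ℕ → Ω → ℝ)
    (hξm : ∀ n, 1 ≤ n → Measurable[F n] (ξ n))
    (hηm : ∀ n, 1 ≤ n → Measurable[F n] (η n))
    (hξv : ∀ n ω, ξ n ω = 1 ∨ ξ n ω = -1)
    (hηv : ∀ n ω, η n ω = 1 ∨ η n ω = -1)
    (hhalf : ∀ n, 1 ≤ n →
      (P[({ω | ξ n ω = 1}).indicator (fun _ => (1 : ℝ)) | F (n - 1)] =ᵐ[P] fun _ => 1 / 2) ∧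
      (P[({ω | ξ n ω = -1}).indicator (fun _ => (1 : ℝ)) | F (n - 1)] =ᵐ[P] fun _ => 1 / 2) ∧
      (P[({ω | η n ω = 1}).indicator (fun _ => (1 : ℝ)) | F (n - 1)] =ᵐ[P] fun _ => 1 / 2) ∧
      (P[({ω | η n ω = -1}).indicator (fun _ => (1 : ℝ)) | F (n - 1)] =ᵐ[P] fun _ => 1 / 2))
    (ζ ψ : ℕ → Ω → ℝ)
    (hζm : ∀ n, Measurable (ζ n)) (hψm : ∀ n, Measurable (ψ n))
    (hζd : ∀ n, P {ω | ζ n ω = 1} = 2⁻¹ ∧ P {ω | ζ n ω = -1} = 2⁻¹)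
    (hψd : ∀ n, P {ω | ψ n ω = 1} = 2⁻¹ ∧ P {ω | ψ n ω = -1} = 2⁻¹)
    (hindep : iIndep (fun i : ℕ ⊕ ℕ ⊕ Unit =>
      Sum.elim (fun n => MeasurableSpace.comap (ζ n) inferInstance)
        (Sum.elim (fun n => MeasurableSpace.comap (ψ n) inferInstance)
          (fun _ => ⨆ n, (F n : MeasurableSpace Ω))) i) P) :
    ∀ (k l : ℕ) (nn : Fin k → ℕ) (mm : Fin l → ℕ),
      (∀ i, 1 ≤ nn i) → (∀ j, 1 ≤ mm j) →
      Function.Injective nn → Function.Injective mm →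
      ∀ (x : Fin k → ℝ) (y : Fin l → ℝ),
        (∀ i, x i = 1 ∨ x i = -1) → (∀ j, y j = 1 ∨ y j = -1) →
        P ({ω | ∀ i, xiAlpha ξ η ζ (nn i) ω = x i} ∩ {ω | ∀ j, xiBeta ξ η ψ (mm j) ω = y j})
          = 2⁻¹ ^ (k + l) :=
  stmt_8_general (mΩ := mΩ) P F ξ η hξm hηm hξv hηv hhalf ζ ψ hζm hψm hζd hψd hindep
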